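/- For the probability distribution p(0,0) = p(1,1) = 1/2 − α/(2π) and p(0,1) = p(1,0) = α/(2π) with α ∈ (0, π), the Shannon entropy H(α) = −2[(α/(2π))·log₂(α/(2π)) + (1/2 − α/(2π))·log₂(1/2 − α/(2π))] satisfies 1 ≤ H(α) ≤ 2, with H(α) = 2 if and only if α = π/2. -/

import Mathlib

open Real

/-! With `p = α / π`, the four probabilities are `p/2, p/2, (1-p)/2, (1-p)/2`, so by the grouping
rule `H α = 1 + h(p)` in bits, where `h` is the binary entropy. The bounds follow from
`0 ≤ h(p) ≤ 1` bit, with `h(p) = 1` bit exactly at `p = 1/2`. -/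

/-- Shannon entropy (base 2) of the message distribution at angle `α`. -/
noncomputable def H (α : ℝ) : ℝ :=
  -2 * ((α/(2*π)) * logb 2 (α/(2*π)) + (1/2 - α/(2*π)) * logb 2 (1/2 - α/(2*π)))

lemma negMulLog_div_two_add_negMulLog_one_sub_div_two (p : ℝ) :
    negMulLog (p / 2) + negMulLog ((1 - p) / 2) = (binEntropy p + log 2) / 2 := by
  have h_half : negMulLog 2⁻¹ = log 2 / 2 := by simp [negMulLog, log_inv]; ring
  simp only [div_eq_mul_inv, negMulLog_mul, h_half, binEntropy_eq_negMulLog_add_negMulLog_one_sub]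
  ring

lemma H_eq_one_add_binEntropy_div_log_two (α : ℝ) :
    H α = 1 + binEntropy (α / π) / log 2 := by
  have hlog2 : log 2 ≠ 0 := (log_pos one_lt_two).ne'
  have hH : H α = 2 * (negMulLog (α / π / 2) + negMulLog ((1 - α / π) / 2)) / log 2 := by
    rw [show α / π / 2 = α / (2 * π) by ring, show (1 - α / π) / 2 = 1 / 2 - α / (2 * π) by ring]
    simp only [H, negMulLog, logb]
    field_simp
    ring
  rw [hH, negMulLog_div_two_add_negMulLog_one_sub_div_two]
  field_simp
  ring

theorem entropy_bounds (α : ℝ) (hα : α ∈ Set.Ioo 0 π) :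
    (1 ≤ H α ∧ H α ≤ 2) ∧ (H α = 2 ↔ α = π/2) := by
  obtain ⟨h0, hπ⟩ := hα
  have hlog2 : 0 < log 2 := log_pos one_lt_two
  have hp0 : 0 ≤ α / π := div_nonneg h0.le pi_pos.le
  have hp1 : α / π ≤ 1 := (div_le_one pi_pos).2 hπ.le
  rw [H_eq_one_add_binEntropy_div_log_two]
  refine ⟨⟨?_, ?_⟩, ?_⟩
  · exact le_add_of_nonneg_right (div_nonneg (binEntropy_nonneg hp0 hp1) hlog2.le)
  · linarith [(div_le_one hlog2).2 (binEntropy_le_log_two (p := α / π))]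
  · calc 1 + binEntropy (α / π) / log 2 = 2 ↔ binEntropy (α / π) = log 2 := by
          rw [← div_eq_one_iff_eq hlog2.ne']; constructor <;> intro h <;> linarith
      _ ↔ α / π = 2⁻¹ := binEntropy_eq_log_two
      _ ↔ α = π / 2 := by rw [div_eq_iff pi_pos.ne']; constructor <;> intro h <;> linarith
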